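/- arXiv:2302.02144 — 2 statements merged into one kernel-verified Lean document; each statement's English description precedes it below -/
import Mathlib

section
/- Let a, b > 0 and θ_i = c^(i+1)K^(i²) with c > 0 and K² > (a+b)²/(4ab). Then for all u, v ≥ 0 and all real ξ, η, the expression Σ_{i=0}^{p-2} C(p-2,i) u^i v^{p-2-i} (a θ_{i+2} ξ² + (a+b) θ_{i+1} ξη + b θ_i η²) is nonnegative. -/
/-!
Each summand is a nonnegative binomial weight times the binary quadratic form
`a θ_{i+2} ξ² + (a+b) θ_{i+1} ξη + b θ_i η²`. Since `θ_{i+2} θ_i = K² θ_{i+1}²`, its discriminant is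
`((a+b)² - 4abK²) θ_{i+1}²`, which is nonpositive by the hypothesis on `K`; a form with positive
leading coefficient and nonpositive discriminant is nonnegative.
-/

theorem binaryQuadratic_nonneg_of_discrim_nonpos {R : Type*} [CommRing R] [LinearOrder R]
    [IsStrictOrderedRing R] {A B C : R} (hA : 0 < A) (hdisc : discrim A B C ≤ 0) (x y : R) :
    0 ≤ A * x ^ 2 + B * x * y + C * y ^ 2 := by
  have hsq : 4 * A * (A * x ^ 2 + B * x * y + C * y ^ 2) =
      (2 * A * x + B * y) ^ 2 - discrim A B C * y ^ 2 := by
    rw [discrim]; ring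
  have h4A : 0 ≤ 4 * A * (A * x ^ 2 + B * x * y + C * y ^ 2) := by
    rw [hsq]
    exact sub_nonneg.2 ((mul_nonpos_of_nonpos_of_nonneg hdisc (sq_nonneg y)).trans (sq_nonneg _))
  exact nonneg_of_mul_nonneg_right h4A (by positivity)

theorem mul_eq_sq_mul_sq_of_eq_pow_mul_pow_sq {M : Type*} [CommMonoid M] {c K : M} {θ : ℕ → M}
    (hθ : ∀ i, θ i = c ^ (i + 1) * K ^ (i ^ 2)) (i : ℕ) :
    θ (i + 2) * θ i = K ^ 2 * θ (i + 1) ^ 2 := by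
  simp only [hθ, mul_pow, ← pow_mul, ← mul_assoc]
  rw [mul_right_comm _ (K ^ _), ← pow_add, mul_assoc, ← pow_add, mul_comm (K ^ 2), mul_assoc,
    ← pow_add]
  congr 2 <;> ring

theorem stmt10_general (p : ℕ) (a b c K : ℝ) (ha : 0 < a) (hb : 0 < b)
    (hc : 0 < c) (hK : 0 < K) (hK2 : K ^ 2 > (a + b) ^ 2 / (4 * a * b))
    (θ : ℕ → ℝ) (hθ : ∀ i, θ i = c ^ (i + 1) * K ^ (i ^ 2)) :
    ∀ u v : ℝ, 0 ≤ u → 0 ≤ v → ∀ ξ η : ℝ,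
      0 ≤ ∑ i ∈ Finset.range (p - 1),
        ((p - 2).choose i : ℝ) * u ^ i * v ^ (p - 2 - i) *
          (a * θ (i + 2) * ξ ^ 2 + (a + b) * θ (i + 1) * ξ * η + b * θ i * η ^ 2) := by
  intro u v hu hv ξ η
  have hK2' : (a + b) ^ 2 ≤ 4 * a * b * K ^ 2 := by
    rw [gt_iff_lt, div_lt_iff₀ (by positivity)] at hK2
    linarith
  refine Finset.sum_nonneg fun i _ => mul_nonneg (by positivity) ?_
  refine binaryQuadratic_nonneg_of_discrim_nonpos (by rw [hθ]; positivity) ?_ ξ η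
  have hθ_sq : θ (i + 2) * θ i = K ^ 2 * θ (i + 1) ^ 2 :=
    mul_eq_sq_mul_sq_of_eq_pow_mul_pow_sq hθ i
  calc discrim (a * θ (i + 2)) ((a + b) * θ (i + 1)) (b * θ i)
      = ((a + b) ^ 2 - 4 * a * b * K ^ 2) * θ (i + 1) ^ 2 := by
        rw [discrim]; linear_combination (-4 * a * b) * hθ_sq
    _ ≤ 0 := mul_nonpos_of_nonpos_of_nonneg (by linarith) (sq_nonneg _)

theorem stmt10 (p : ℕ) (hp : 2 ≤ p) (a b c K : ℝ) (ha : 0 < a) (hb : 0 < b)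
    (hc : 0 < c) (hK : 0 < K) (hK2 : K ^ 2 > (a + b) ^ 2 / (4 * a * b))
    (θ : ℕ → ℝ) (hθ : ∀ i, θ i = c ^ (i + 1) * K ^ (i ^ 2)) :
    ∀ u v : ℝ, 0 ≤ u → 0 ≤ v → ∀ ξ η : ℝ,
      0 ≤ ∑ i ∈ Finset.range (p - 1),
        ((p - 2).choose i : ℝ) * u ^ i * v ^ (p - 2 - i) *
          (a * θ (i + 2) * ξ ^ 2 + (a + b) * θ (i + 1) * ξ * η + b * θ i * η ^ 2) :=
  stmt10_general p a b c K ha hb hc hK hK2 θ hθ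
end

section
/- For p ≥ 2 and the sequence θ_i = c^(i+1)K^(i²) (c, K > 0), the Hessian matrix of H_p(u,v) = Σ_{i=0}^p C(p,i)θ_i u^i v^{p-i} at any point (u,v) with u, v ≥ 0 is positive semidefinite whenever K ≥ 1. In particular H_p is convex on the nonnegative quadrant. -/
/-!
Write `Φₙ(a)(u, v) = ∑ C(n,i) aᵢ uⁱ vⁿ⁻ⁱ`, so that `H_p = Φ_p(θ)`. Since `C(n+1,i+1)(i+1)` and
`C(n+1,i)(n+1-i)` both equal `(n+1) C(n,i)`, the partial derivatives of `Φₙ₊₁(a)` are `(n+1)` times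
`Φₙ(a ∘ succ)` and `Φₙ(a)`. Hence the Hessian of `Φₙ₊₂(a)` is `(n+2)(n+1)` times the matrix with
entries `Φₙ(a(·+2))`, `Φₙ(a(·+1))`, `Φₙ(a)`. If `a ≥ 0` is log-convex, `a_{i+1}² ≤ aᵢ a_{i+2}`,
Cauchy–Schwarz with the nonnegative weights `C(n,i) uⁱ vⁿ⁻ⁱ` bounds the square of the off-diagonal
entry by the product of the diagonal ones, so the Hessian is positive semidefinite on the
quadrant; convexity follows by restricting to segments, along which the second derivative is the
Hessian quadratic form. The sequence `θᵢ = c^(i+1) K^(i²)` is log-convex because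
`θᵢ θ_{i+2} = K² θ_{i+1}²`.
-/

open Finset

noncomputable def binomialForm (n : ℕ) (a : ℕ → ℝ) (u v : ℝ) : ℝ :=
  ∑ i ∈ range (n + 1), (n.choose i : ℝ) * a i * u ^ i * v ^ (n - i)

lemma sum_choose_succ_mul_deriv_pow_left (n : ℕ) (f : ℕ → ℝ) (x y : ℝ) :
    ∑ i ∈ range (n + 2), ((n + 1).choose i : ℝ) * f i * ((i : ℝ) * x ^ (i - 1)) * y ^ (n + 1 - i)
      = (n + 1) * binomialForm n (fun i => f (i + 1)) x y := by
  rw [sum_range_succ', binomialForm, mul_sum]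
  simp only [Nat.cast_zero, mul_zero, zero_mul, add_zero]
  refine sum_congr rfl fun i hi => ?_
  have hi : i ≤ n := Nat.lt_succ_iff.mp (mem_range.mp hi)
  have hc : ((n + 1).choose (i + 1) : ℝ) * (i + 1) = (n + 1) * n.choose i := by
    exact_mod_cast (Nat.add_one_mul_choose_eq n i).symm
  rw [show n + 1 - (i + 1) = n - i by omega, Nat.add_sub_cancel]
  push_cast
  linear_combination (f (i + 1) * x ^ i * y ^ (n - i)) * hc

lemma sum_choose_succ_mul_deriv_pow_right (n : ℕ) (f : ℕ → ℝ) (x y : ℝ) :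
    ∑ i ∈ range (n + 2),
        ((n + 1).choose i : ℝ) * f i * x ^ i * (((n + 1 - i : ℕ) : ℝ) * y ^ (n + 1 - i - 1))
      = (n + 1) * binomialForm n f x y := by
  rw [sum_range_succ, binomialForm, mul_sum]
  simp only [Nat.sub_self, Nat.cast_zero, zero_mul, mul_zero, add_zero]
  refine sum_congr rfl fun i hi => ?_
  have hi : i ≤ n := Nat.lt_succ_iff.mp (mem_range.mp hi)
  have hc : ((n + 1).choose i : ℝ) * ((n + 1 - i : ℕ) : ℝ) = (n + 1) * n.choose i := by
    exact_mod_cast (Nat.choose_mul_succ_eq n i).symm.trans (mul_comm _ _)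
  rw [show n + 1 - i - 1 = n - i by omega]
  linear_combination (f i * x ^ i * y ^ (n - i)) * hc

theorem HasDerivAt.binomialForm {x y : ℝ → ℝ} {x' y' t : ℝ} (hx : HasDerivAt x x' t)
    (hy : HasDerivAt y y' t) (n : ℕ) (a : ℕ → ℝ) :
    HasDerivAt (fun s => binomialForm (n + 1) a (x s) (y s))
      ((n + 1) * (x' * binomialForm n (fun i => a (i + 1)) (x t) (y t)
        + y' * binomialForm n a (x t) (y t))) t := by
  have h := HasDerivAt.fun_sum (u := range (n + 2)) (x := t) fun i _ =>
    (((hx.pow i).const_mul (((n + 1).choose i : ℝ) * a i)).mul (hy.pow (n + 1 - i)))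
  refine h.congr_deriv ?_
  rw [mul_add, mul_left_comm, mul_left_comm _ y', ← sum_choose_succ_mul_deriv_pow_left,
    ← sum_choose_succ_mul_deriv_pow_right, mul_sum, mul_sum, ← sum_add_distrib]
  refine sum_congr rfl fun i _ => ?_
  simp only [Pi.pow_apply]
  ring

lemma hasDerivAt_binomialForm_left (n : ℕ) (a : ℕ → ℝ) (u v : ℝ) :
    HasDerivAt (fun x => binomialForm (n + 1) a x v)
      ((n + 1) * binomialForm n (fun i => a (i + 1)) u v) u := by
  simpa using (hasDerivAt_id u).binomialForm (hasDerivAt_const u v) n a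

lemma hasDerivAt_binomialForm_right (n : ℕ) (a : ℕ → ℝ) (u v : ℝ) :
    HasDerivAt (fun y => binomialForm (n + 1) a u y) ((n + 1) * binomialForm n a u v) v := by
  simpa using (hasDerivAt_const v u).binomialForm (hasDerivAt_id v) n a

lemma binomialForm_nonneg {a : ℕ → ℝ} (ha : ∀ i, 0 ≤ a i) {u v : ℝ} (hu : 0 ≤ u) (hv : 0 ≤ v)
    (n : ℕ) : 0 ≤ binomialForm n a u v :=
  sum_nonneg fun i _ => by have := ha i; positivity

lemma binomialForm_shift_sq_le {a : ℕ → ℝ} (ha : ∀ i, 0 ≤ a i)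
    (hlog : ∀ i, a (i + 1) ^ 2 ≤ a i * a (i + 2)) {u v : ℝ} (hu : 0 ≤ u) (hv : 0 ≤ v) (n : ℕ) :
    binomialForm n (fun i => a (i + 1)) u v ^ 2
      ≤ binomialForm n (fun i => a (i + 2)) u v * binomialForm n a u v := by
  refine sum_sq_le_sum_mul_sum_of_sq_le_mul _ (fun i _ => ?_) (fun i _ => ?_) fun i _ => ?_
  · have := ha (i + 2); positivity
  · have := ha i; positivity
  · calc ((n.choose i : ℝ) * a (i + 1) * u ^ i * v ^ (n - i)) ^ 2
        = ((n.choose i : ℝ) * u ^ i * v ^ (n - i)) ^ 2 * a (i + 1) ^ 2 := by ring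
      _ ≤ ((n.choose i : ℝ) * u ^ i * v ^ (n - i)) ^ 2 * (a i * a (i + 2)) := by
          gcongr; exact hlog i
      _ = _ := by ring

lemma quadratic_nonneg_of_sq_le_mul {A B D : ℝ} (hA : 0 ≤ A) (hD : 0 ≤ D) (hB : B ^ 2 ≤ A * D)
    (x y : ℝ) : 0 ≤ A * x ^ 2 + 2 * B * x * y + D * y ^ 2 := by
  rcases hA.eq_or_lt with rfl | hA
  · obtain rfl : B = 0 := by nlinarith
    simpa using mul_nonneg hD (sq_nonneg y)
  · nlinarith [sq_nonneg (A * x + B * y), mul_nonneg (sub_nonneg.2 hB) (sq_nonneg y)]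

lemma Matrix.posSemidef_of_sq_le_mul {A B D : ℝ} (hA : 0 ≤ A) (hD : 0 ≤ D) (hB : B ^ 2 ≤ A * D) :
    Matrix.PosSemidef !![A, B; B, D] := by
  refine Matrix.posSemidef_iff_dotProduct_mulVec.2 ⟨?_, fun x => ?_⟩
  · ext i j
    fin_cases i <;> fin_cases j <;> rfl
  · have := quadratic_nonneg_of_sq_le_mul hA hD hB (x 0) (x 1)
    simp only [dotProduct, Pi.star_apply, star_trivial, Matrix.mulVec, Matrix.of_apply,
      Matrix.cons_val', Matrix.cons_val_fin_one, Fin.sum_univ_two, Matrix.cons_val_zero,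
      Matrix.cons_val_one]
    linarith

lemma convexOn_of_convexOn_lineMap {E : Type*} [AddCommGroup E] [Module ℝ E] {s : Set E}
    {f : E → ℝ} (hs : Convex ℝ s)
    (h : ∀ x ∈ s, ∀ y ∈ s, ConvexOn ℝ (Set.Icc (0 : ℝ) 1) fun t => f (AffineMap.lineMap x y t)) :
    ConvexOn ℝ s f := by
  refine ⟨hs, fun x hx y hy a b ha hb hab => ?_⟩
  have := (h x hx y hy).2 (by simp : (0 : ℝ) ∈ Set.Icc 0 1) (by simp : (1 : ℝ) ∈ Set.Icc 0 1)
    ha hb hab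
  simp only [smul_eq_mul, mul_zero, mul_one, zero_add, AffineMap.lineMap_apply_zero,
    AffineMap.lineMap_apply_one] at this
  rwa [AffineMap.lineMap_apply_module, ← eq_sub_of_add_eq hab] at this

section LogConvex

variable {a : ℕ → ℝ} (ha : ∀ i, 0 ≤ a i) (hlog : ∀ i, a (i + 1) ^ 2 ≤ a i * a (i + 2))
include ha hlog

theorem posSemidef_hessian_binomialForm {u v : ℝ} (hu : 0 ≤ u) (hv : 0 ≤ v) (n : ℕ) :
    Matrix.PosSemidef
      !![deriv (deriv fun x => binomialForm (n + 2) a x v) u,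
          deriv (fun y => deriv (fun x => binomialForm (n + 2) a x y) u) v;
         deriv (fun y => deriv (fun x => binomialForm (n + 2) a x y) u) v,
          deriv (deriv fun y => binomialForm (n + 2) a u y) v] := by
  have hx (y : ℝ) : deriv (fun x => binomialForm (n + 2) a x y)
      = fun x => (↑(n + 1) + 1) * binomialForm (n + 1) (fun i => a (i + 1)) x y :=
    funext fun x => (hasDerivAt_binomialForm_left (n + 1) a x y).deriv
  have hy : deriv (fun y => binomialForm (n + 2) a u y)
      = fun y => (↑(n + 1) + 1) * binomialForm (n + 1) a u y :=
    funext fun y => (hasDerivAt_binomialForm_right (n + 1) a u y).deriv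
  set k : ℝ := (↑(n + 1) + 1) * (n + 1)
  have hxx : deriv (deriv fun x => binomialForm (n + 2) a x v) u
      = k * binomialForm n (fun i => a (i + 2)) u v := by
    rw [hx, ((hasDerivAt_binomialForm_left n _ u v).const_mul _).deriv, mul_assoc]
  have hxy : deriv (fun y => deriv (fun x => binomialForm (n + 2) a x y) u) v
      = k * binomialForm n (fun i => a (i + 1)) u v := by
    simp only [hx]
    rw [((hasDerivAt_binomialForm_right n _ u v).const_mul _).deriv, mul_assoc]
  have hyy : deriv (deriv fun y => binomialForm (n + 2) a u y) v = k * binomialForm n a u v := by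
    rw [hy, ((hasDerivAt_binomialForm_right n _ u v).const_mul _).deriv, mul_assoc]
  rw [hxx, hxy, hyy]
  have hk : 0 ≤ k := by positivity
  refine Matrix.posSemidef_of_sq_le_mul
    (mul_nonneg hk (binomialForm_nonneg (fun i => ha _) hu hv n))
    (mul_nonneg hk (binomialForm_nonneg ha hu hv n)) ?_
  calc (k * binomialForm n (fun i => a (i + 1)) u v) ^ 2
      = k ^ 2 * binomialForm n (fun i => a (i + 1)) u v ^ 2 := by ring
    _ ≤ k ^ 2 * (binomialForm n (fun i => a (i + 2)) u v * binomialForm n a u v) := by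
      gcongr; exact binomialForm_shift_sq_le ha hlog hu hv n
    _ = _ := by ring

theorem convexOn_binomialForm (n : ℕ) :
    ConvexOn ℝ (Set.Ici 0 ×ˢ Set.Ici 0) fun q : ℝ × ℝ => binomialForm (n + 2) a q.1 q.2 := by
  refine convexOn_of_convexOn_lineMap ((convex_Ici 0).prod (convex_Ici 0)) fun q hq r hr => ?_
  simp only [AffineMap.fst_lineMap, AffineMap.snd_lineMap]
  have hx (t : ℝ) := AffineMap.hasDerivAt_lineMap (𝕜 := ℝ) (a := q.1) (b := r.1) (x := t)
  have hy (t : ℝ) := AffineMap.hasDerivAt_lineMap (𝕜 := ℝ) (a := q.2) (b := r.2) (x := t)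
  have hG (t : ℝ) := (hx t).binomialForm (hy t) (n + 1) a
  refine convexOn_of_hasDerivWithinAt2_nonneg (convex_Icc 0 1)
    (HasDerivAt.continuousOn fun t _ => hG t) (fun t _ => (hG t).hasDerivWithinAt)
    (fun t _ => ((((hx t).binomialForm (hy t) n _).const_mul _).add
      (((hx t).binomialForm (hy t) n a).const_mul _)).const_mul _ |>.hasDerivWithinAt)
    fun t ht => ?_
  have ht : t ∈ Set.Icc (0 : ℝ) 1 := interior_subset ht
  have hxt : 0 ≤ AffineMap.lineMap q.1 r.1 t := (convex_Ici 0).lineMap_mem hq.1 hr.1 ht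
  have hyt : 0 ≤ AffineMap.lineMap q.2 r.2 t := (convex_Ici 0).lineMap_mem hq.2 hr.2 ht
  have := quadratic_nonneg_of_sq_le_mul (binomialForm_nonneg (fun i => ha _) hxt hyt n)
    (binomialForm_nonneg ha hxt hyt n) (binomialForm_shift_sq_le ha hlog hxt hyt n)
    (r.1 - q.1) (r.2 - q.2)
  have hk : (0 : ℝ) ≤ (↑(n + 1) + 1) * (n + 1) := by positivity
  refine (mul_nonneg hk this).trans_eq ?_
  rw [show (fun i => a (i + 1 + 1)) = fun i => a (i + 2) from rfl]
  ring

end LogConvex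

theorem stmt18 (p : ℕ) (hp : 2 ≤ p) (c K : ℝ) (hc : 0 < c) (hK : 1 ≤ K)
    (θ : ℕ → ℝ) (hθ : ∀ i, θ i = c ^ (i + 1) * K ^ (i ^ 2))
    (H : ℝ → ℝ → ℝ)
    (hH : ∀ u v : ℝ, H u v = ∑ i ∈ Finset.range (p + 1),
      (p.choose i : ℝ) * θ i * u ^ i * v ^ (p - i)) :
    (∀ u v : ℝ, 0 ≤ u → 0 ≤ v →
      Matrix.PosSemidef
        !![deriv (deriv (fun x => H x v)) u, deriv (fun y => deriv (fun x => H x y) u) v;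
           deriv (fun y => deriv (fun x => H x y) u) v, deriv (deriv (fun y => H u y)) v]) ∧
    ConvexOn ℝ (Set.Ici (0:ℝ) ×ˢ Set.Ici (0:ℝ)) (fun q : ℝ × ℝ => H q.1 q.2) := by
  obtain ⟨n, rfl⟩ : ∃ n, p = n + 2 := ⟨p - 2, by omega⟩
  obtain rfl : H = fun u v => binomialForm (n + 2) θ u v := funext₂ hH
  have hθ_nonneg (i : ℕ) : 0 ≤ θ i := by
    rw [hθ]
    have : 0 < K := one_pos.trans_le hK
    positivity
  have hθ_logConvex (i : ℕ) : θ (i + 1) ^ 2 ≤ θ i * θ (i + 2) := by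
    have hsq : θ i * θ (i + 2) = K ^ 2 * θ (i + 1) ^ 2 := by simp only [hθ]; ring
    rw [hsq]
    exact le_mul_of_one_le_left (sq_nonneg _) (one_le_pow₀ hK)
  exact ⟨fun u v hu hv => posSemidef_hessian_binomialForm hθ_nonneg hθ_logConvex hu hv n,
    convexOn_binomialForm hθ_nonneg hθ_logConvex n⟩
end
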